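/- Let G be a finite additive abelian group, let W, Z be random variables with values in finite sets, and let L, K be G-valued random variables, all on a common probability space, and set L_v = L ⊕ K. Assume: (i) W is independent of L; (ii) K is independent of L; and (iii) L is conditionally independent of the pair (Z, W) given L_v (i.e., the Markov chain L − L_v − (Z, W) holds). Then I(W, L; Z) ≤ I(W; Z) + H(L_v) − H(K). (This is the single-block leakage bound, equation chain (49), in the block-Markov secrecy analysis of Theorem 1, using I(W,L;Z) = I(W;Z) + I(L;Z,W) ≤ I(W;Z) + I(L;L_v) and H(L_v | L) = H(K).) -/

import Mathlib

open scoped BigOperators Classical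

/-- A probability mass function on a finite type, representing a finite probability space. -/
structure FinPMF (Ω : Type*) [Fintype Ω] where
  p : Ω → ℝ
  nonneg : ∀ ω, 0 ≤ p ω
  sum_one : ∑ ω, p ω = 1

namespace FinPMF

variable {Ω : Type*} [Fintype Ω] (μ : FinPMF Ω)

/-- Probability that the random variable `X` takes the value `x`. -/
def prob {α : Type*} [DecidableEq α] (X : Ω → α) (x : α) : ℝ :=
  ∑ ω, if X ω = x then μ.p ω else 0

/-- Shannon entropy `H(X)` (with the natural logarithm as the fixed base)
of a random variable with values in a finite set. -/
noncomputable def H {α : Type*} [Fintype α] [DecidableEq α] (X : Ω → α) : ℝ :=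
  ∑ x : α, -(μ.prob X x * Real.log (μ.prob X x))

/-- Conditional Shannon entropy `H(X | Y) = H(X, Y) - H(Y)`. -/
noncomputable def condH {α β : Type*} [Fintype α] [DecidableEq α] [Fintype β] [DecidableEq β]
    (X : Ω → α) (Y : Ω → β) : ℝ :=
  μ.H (fun ω => (X ω, Y ω)) - μ.H Y

/-- Mutual information `I(X ; Y) = H(X) + H(Y) - H(X, Y)`. -/
noncomputable def mutInfo {α β : Type*} [Fintype α] [DecidableEq α] [Fintype β] [DecidableEq β]
    (X : Ω → α) (Y : Ω → β) : ℝ :=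
  μ.H X + μ.H Y - μ.H (fun ω => (X ω, Y ω))

/-- The random variables `X` and `Y` are independent. -/
def Indep {α β : Type*} [DecidableEq α] [DecidableEq β] (X : Ω → α) (Y : Ω → β) : Prop :=
  ∀ x y, μ.prob (fun ω => (X ω, Y ω)) (x, y) = μ.prob X x * μ.prob Y y

/-- Markov chain `A − B − C`: the random variables `A` and `C` are conditionally
independent given `B`, expressed multiplicatively as
`P(A=a, B=b, C=c) · P(B=b) = P(A=a, B=b) · P(B=b, C=c)`. -/
def CondIndep {α β γ : Type*} [DecidableEq α] [DecidableEq β] [DecidableEq γ]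
    (A : Ω → α) (B : Ω → β) (C : Ω → γ) : Prop :=
  ∀ a b c,
    μ.prob (fun ω => (A ω, B ω, C ω)) (a, b, c) * μ.prob B b =
      μ.prob (fun ω => (A ω, B ω)) (a, b) * μ.prob (fun ω => (B ω, C ω)) (b, c)

end FinPMF



namespace FinPMF

variable {Ω : Type*} [Fintype Ω] (μ : FinPMF Ω)

lemma prob_nonneg' {α : Type*} [DecidableEq α] (X : Ω → α) (x : α) : 0 ≤ μ.prob X x :=
  Finset.sum_nonneg fun ω _ => by split <;> simp [μ.nonneg ω]

lemma sum_prob' {α : Type*} [Fintype α] [DecidableEq α] (X : Ω → α) :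
    ∑ x, μ.prob X x = 1 := by
  unfold prob
  rw [Finset.sum_comm]
  simp [μ.sum_one]

lemma prob_comp' {α β : Type*} [Fintype α] [DecidableEq α] [DecidableEq β]
    (f : α → β) (X : Ω → α) (y : β) :
    μ.prob (fun ω => f (X ω)) y = ∑ x, if f x = y then μ.prob X x else 0 := by
  symm
  calc ∑ x, (if f x = y then μ.prob X x else 0)
      = ∑ x, ∑ ω, (if X ω = x then (if f x = y then μ.p ω else 0) else 0) := by
        refine Finset.sum_congr rfl fun x _ => ?_
        by_cases h : f x = y <;> simp [h, prob]
    _ = ∑ ω, ∑ x, (if X ω = x then (if f x = y then μ.p ω else 0) else 0) :=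
        Finset.sum_comm
    _ = ∑ ω, (if f (X ω) = y then μ.p ω else 0) := by simp
    _ = μ.prob (fun ω => f (X ω)) y := rfl

lemma prob_le_comp' {α β : Type*} [Fintype α] [DecidableEq α] [DecidableEq β]
    (f : α → β) (X : Ω → α) (x : α) :
    μ.prob X x ≤ μ.prob (fun ω => f (X ω)) (f x) := by
  conv_rhs => rw [prob_comp']
  calc μ.prob X x = if f x = f x then μ.prob X x else 0 := by simp
    _ ≤ ∑ x', if f x' = f x then μ.prob X x' else 0 :=
      Finset.single_le_sum (f := fun x' => if f x' = f x then μ.prob X x' else 0)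
        (fun i _ => by by_cases h : f i = f x <;> simp [h, μ.prob_nonneg']) (Finset.mem_univ x)

lemma H_eq_sum' {α : Type*} [Fintype α] [DecidableEq α] (X : Ω → α) :
    μ.H X = -∑ x, μ.prob X x * Real.log (μ.prob X x) := by
  simp [H]

lemma H_comp' {α β : Type*} [Fintype α] [DecidableEq α] [Fintype β] [DecidableEq β]
    (f : α → β) (X : Ω → α) :
    μ.H (fun ω => f (X ω))
      = -∑ x, μ.prob X x * Real.log (μ.prob (fun ω => f (X ω)) (f x)) := by
  rw [H_eq_sum']
  congr 1
  calc ∑ y, μ.prob (fun ω => f (X ω)) y * Real.log (μ.prob (fun ω => f (X ω)) y)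
      = ∑ y, ∑ x, (if f x = y then μ.prob X x * Real.log (μ.prob (fun ω => f (X ω)) y) else 0) := by
        refine Finset.sum_congr rfl fun y _ => ?_
        nth_rewrite 1 [prob_comp']
        rw [Finset.sum_mul]
        exact Finset.sum_congr rfl fun x _ => by rw [ite_mul, zero_mul]
    _ = ∑ y, ∑ x, (if f x = y then μ.prob X x * Real.log (μ.prob (fun ω => f (X ω)) (f x)) else 0) := by
        refine Finset.sum_congr rfl fun y _ => Finset.sum_congr rfl fun x _ => ?_
        by_cases h : f x = y <;> simp [h]
    _ = ∑ x, ∑ y, (if f x = y then μ.prob X x * Real.log (μ.prob (fun ω => f (X ω)) (f x)) else 0) :=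
        Finset.sum_comm
    _ = ∑ x, μ.prob X x * Real.log (μ.prob (fun ω => f (X ω)) (f x)) := by simp

lemma H_equiv' {α β : Type*} [Fintype α] [DecidableEq α] [Fintype β] [DecidableEq β]
    (e : α ≃ β) (X : Ω → α) :
    μ.H (fun ω => e (X ω)) = μ.H X := by
  have hp : ∀ y, μ.prob (fun ω => e (X ω)) y = μ.prob X (e.symm y) := by
    intro y
    unfold prob
    refine Finset.sum_congr rfl fun ω _ => ?_
    by_cases h : X ω = e.symm y
    · simp [h]
    · rw [if_neg, if_neg h]
      intro hc; exact h (by simpa using congrArg e.symm hc)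
  unfold H
  simp_rw [hp]
  exact Equiv.sum_comp e.symm (fun x => -(μ.prob X x * Real.log (μ.prob X x)))

end FinPMF

namespace FinPMF

variable {Ω : Type*} [Fintype Ω] (μ : FinPMF Ω)

lemma H_pair_of_indep' {α β : Type*} [Fintype α] [DecidableEq α] [Fintype β] [DecidableEq β]
    (X : Ω → α) (Y : Ω → β) (h : μ.Indep X Y) :
    μ.H (fun ω => (X ω, Y ω)) = μ.H X + μ.H Y := by
  rw [H_eq_sum', H_eq_sum', H_eq_sum']
  rw [Fintype.sum_prod_type]
  have key : ∀ x y, μ.prob (fun ω => (X ω, Y ω)) (x, y)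
      * Real.log (μ.prob (fun ω => (X ω, Y ω)) (x, y))
      = μ.prob X x * Real.log (μ.prob X x) * μ.prob Y y
        + μ.prob X x * (μ.prob Y y * Real.log (μ.prob Y y)) := by
    intro x y
    rw [h x y]
    rcases eq_or_lt_of_le (μ.prob_nonneg' X x) with hx | hx
    · rw [← hx]; ring
    rcases eq_or_lt_of_le (μ.prob_nonneg' Y y) with hy | hy
    · rw [← hy]; ring
    rw [Real.log_mul (ne_of_gt hx) (ne_of_gt hy)]; ring
  simp_rw [key, Finset.sum_add_distrib, ← Finset.mul_sum, ← Finset.sum_mul, sum_prob',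
    mul_one, one_mul]
  rw [neg_add]

lemma marginal_snd' {β γ : Type*} [Fintype β] [DecidableEq β] [Fintype γ] [DecidableEq γ]
    (B : Ω → β) (C : Ω → γ) (c : γ) :
    ∑ b, μ.prob (fun ω => (B ω, C ω)) (b, c) = μ.prob C c := by
  have h := μ.prob_comp' (fun p : β × γ => p.2) (fun ω => (B ω, C ω)) c
  rw [Fintype.sum_prod_type] at h
  have h2 : ∀ b : β, (∑ c' : γ, if c' = c then μ.prob (fun ω => (B ω, C ω)) (b, c') else 0)
      = μ.prob (fun ω => (B ω, C ω)) (b, c) := fun b => by simp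
  simp only [] at h
  calc ∑ b, μ.prob (fun ω => (B ω, C ω)) (b, c)
      = ∑ b, ∑ c' : γ, if c' = c then μ.prob (fun ω => (B ω, C ω)) (b, c') else 0 := by
        exact (Finset.sum_congr rfl fun b _ => (h2 b).symm)
    _ = μ.prob C c := h.symm

lemma key_term_ineq (p q r s : ℝ) (hp : 0 ≤ p) (hq0 : 0 ≤ q) (hr0 : 0 ≤ r) (hs0 : 0 ≤ s)
    (hpq : p ≤ q) (hpr : p ≤ r) (hps : p ≤ s) :
    p * Real.log q + p * Real.log r - p * Real.log p - p * Real.log s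
      ≤ q * r / s - p := by
  rcases eq_or_lt_of_le hp with h | h
  · rw [← h]
    simp [div_nonneg (mul_nonneg hq0 hr0) hs0]
  · have hq : 0 < q := lt_of_lt_of_le h hpq
    have hr : 0 < r := lt_of_lt_of_le h hpr
    have hs : 0 < s := lt_of_lt_of_le h hps
    have hx : (0:ℝ) < q * r / (p * s) := by positivity
    have hlog := Real.log_le_sub_one_of_pos hx
    have e1 : Real.log (q * r / (p * s))
        = Real.log q + Real.log r - Real.log p - Real.log s := by
      rw [Real.log_div (by positivity) (by positivity), Real.log_mul hq.ne' hr.ne',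
        Real.log_mul h.ne' hs.ne']
      ring
    have e2 : p * (q * r / (p * s)) = q * r / s := by
      field_simp
    nlinarith [mul_le_mul_of_nonneg_left hlog (le_of_lt h)]

end FinPMF

namespace FinPMF

variable {Ω : Type*} [Fintype Ω] (μ : FinPMF Ω)

lemma submodular' {α β γ : Type*} [Fintype α] [DecidableEq α] [Fintype β] [DecidableEq β]
    [Fintype γ] [DecidableEq γ] (A : Ω → α) (B : Ω → β) (C : Ω → γ) :
    μ.H (fun ω => (A ω, B ω, C ω)) + μ.H C
      ≤ μ.H (fun ω => (A ω, C ω)) + μ.H (fun ω => (B ω, C ω)) := by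
  have hT := μ.H_eq_sum' (fun ω => (A ω, B ω, C ω))
  have hAC : μ.H (fun ω => (A ω, C ω))
      = -∑ t : α × β × γ, μ.prob (fun ω => (A ω, B ω, C ω)) t
          * Real.log (μ.prob (fun ω => (A ω, C ω)) (t.1, t.2.2)) :=
    μ.H_comp' (fun t : α × β × γ => (t.1, t.2.2)) (fun ω => (A ω, B ω, C ω))
  have hBC : μ.H (fun ω => (B ω, C ω))
      = -∑ t : α × β × γ, μ.prob (fun ω => (A ω, B ω, C ω)) t
          * Real.log (μ.prob (fun ω => (B ω, C ω)) t.2) :=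
    μ.H_comp' (fun t : α × β × γ => t.2) (fun ω => (A ω, B ω, C ω))
  have hC : μ.H C
      = -∑ t : α × β × γ, μ.prob (fun ω => (A ω, B ω, C ω)) t
          * Real.log (μ.prob C t.2.2) :=
    μ.H_comp' (fun t : α × β × γ => t.2.2) (fun ω => (A ω, B ω, C ω))
  rw [hT, hAC, hBC, hC]
  have key : ∑ t : α × β × γ,
      (μ.prob (fun ω => (A ω, C ω)) (t.1, t.2.2) * μ.prob (fun ω => (B ω, C ω)) t.2
        / μ.prob C t.2.2) ≤ 1 := by
    rw [Fintype.sum_prod_type]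
    have inner : ∀ a : α, (∑ u : β × γ,
        μ.prob (fun ω => (A ω, C ω)) (a, u.2) * μ.prob (fun ω => (B ω, C ω)) u / μ.prob C u.2)
        ≤ ∑ c : γ, μ.prob (fun ω => (A ω, C ω)) (a, c) := by
      intro a
      rw [Fintype.sum_prod_type, Finset.sum_comm]
      refine Finset.sum_le_sum fun c _ => ?_
      have hm := μ.marginal_snd' B C c
      calc (∑ b : β, μ.prob (fun ω => (A ω, C ω)) (a, c) * μ.prob (fun ω => (B ω, C ω)) (b, c)
            / μ.prob C c)
          = (∑ b : β, μ.prob (fun ω => (B ω, C ω)) (b, c))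
            * (μ.prob (fun ω => (A ω, C ω)) (a, c) / μ.prob C c) := by
            rw [Finset.sum_mul]; exact Finset.sum_congr rfl fun b _ => by ring
        _ = μ.prob C c * (μ.prob (fun ω => (A ω, C ω)) (a, c) / μ.prob C c) := by rw [hm]
        _ ≤ μ.prob (fun ω => (A ω, C ω)) (a, c) := by
            rcases eq_or_lt_of_le (μ.prob_nonneg' C c) with h0 | h0
            · rw [← h0]; simp [μ.prob_nonneg']
            · rw [mul_comm, div_mul_cancel₀ _ (ne_of_gt h0)]
    calc (∑ a : α, ∑ u : β × γ,
          μ.prob (fun ω => (A ω, C ω)) (a, u.2) * μ.prob (fun ω => (B ω, C ω)) u / μ.prob C u.2)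
        ≤ ∑ a : α, ∑ c : γ, μ.prob (fun ω => (A ω, C ω)) (a, c) :=
          Finset.sum_le_sum fun a _ => inner a
      _ = 1 := by rw [← Fintype.sum_prod_type]; exact μ.sum_prob' (fun ω => (A ω, C ω))
  have hp1 : ∑ t : α × β × γ, μ.prob (fun ω => (A ω, B ω, C ω)) t = 1 :=
    μ.sum_prob' (fun ω => (A ω, B ω, C ω))
  have main : (∑ t : α × β × γ,
      (μ.prob (fun ω => (A ω, B ω, C ω)) t * Real.log (μ.prob (fun ω => (A ω, C ω)) (t.1, t.2.2))
        + μ.prob (fun ω => (A ω, B ω, C ω)) t * Real.log (μ.prob (fun ω => (B ω, C ω)) t.2)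
        - μ.prob (fun ω => (A ω, B ω, C ω)) t * Real.log (μ.prob (fun ω => (A ω, B ω, C ω)) t)
        - μ.prob (fun ω => (A ω, B ω, C ω)) t * Real.log (μ.prob C t.2.2)))
      ≤ ∑ t : α × β × γ,
        (μ.prob (fun ω => (A ω, C ω)) (t.1, t.2.2) * μ.prob (fun ω => (B ω, C ω)) t.2
          / μ.prob C t.2.2 - μ.prob (fun ω => (A ω, B ω, C ω)) t) := by
    refine Finset.sum_le_sum fun t _ => ?_
    exact key_term_ineq _ _ _ _
      (μ.prob_nonneg' _ t)
      (μ.prob_nonneg' _ _) (μ.prob_nonneg' _ _) (μ.prob_nonneg' _ _)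
      (μ.prob_le_comp' (fun t : α × β × γ => (t.1, t.2.2)) (fun ω => (A ω, B ω, C ω)) t)
      (μ.prob_le_comp' (fun t : α × β × γ => t.2) (fun ω => (A ω, B ω, C ω)) t)
      (μ.prob_le_comp' (fun t : α × β × γ => t.2.2) (fun ω => (A ω, B ω, C ω)) t)
  simp only [Finset.sum_sub_distrib, Finset.sum_add_distrib] at main
  linarith

lemma condIndep_entropy' {α β γ : Type*} [Fintype α] [DecidableEq α] [Fintype β] [DecidableEq β]
    [Fintype γ] [DecidableEq γ] (A : Ω → α) (B : Ω → β) (C : Ω → γ)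
    (h : μ.CondIndep A B C) :
    μ.H (fun ω => (A ω, B ω, C ω)) + μ.H B
      = μ.H (fun ω => (A ω, B ω)) + μ.H (fun ω => (B ω, C ω)) := by
  have hT := μ.H_eq_sum' (fun ω => (A ω, B ω, C ω))
  have hAB : μ.H (fun ω => (A ω, B ω))
      = -∑ t : α × β × γ, μ.prob (fun ω => (A ω, B ω, C ω)) t
          * Real.log (μ.prob (fun ω => (A ω, B ω)) (t.1, t.2.1)) :=
    μ.H_comp' (fun t : α × β × γ => (t.1, t.2.1)) (fun ω => (A ω, B ω, C ω))
  have hBC : μ.H (fun ω => (B ω, C ω))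
      = -∑ t : α × β × γ, μ.prob (fun ω => (A ω, B ω, C ω)) t
          * Real.log (μ.prob (fun ω => (B ω, C ω)) t.2) :=
    μ.H_comp' (fun t : α × β × γ => t.2) (fun ω => (A ω, B ω, C ω))
  have hB : μ.H B
      = -∑ t : α × β × γ, μ.prob (fun ω => (A ω, B ω, C ω)) t
          * Real.log (μ.prob B t.2.1) :=
    μ.H_comp' (fun t : α × β × γ => t.2.1) (fun ω => (A ω, B ω, C ω))
  rw [hT, hAB, hBC, hB]
  have key : ∀ t : α × β × γ,
      μ.prob (fun ω => (A ω, B ω, C ω)) t * Real.log (μ.prob (fun ω => (A ω, B ω, C ω)) t)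
        + μ.prob (fun ω => (A ω, B ω, C ω)) t * Real.log (μ.prob B t.2.1)
      = μ.prob (fun ω => (A ω, B ω, C ω)) t * Real.log (μ.prob (fun ω => (A ω, B ω)) (t.1, t.2.1))
        + μ.prob (fun ω => (A ω, B ω, C ω)) t * Real.log (μ.prob (fun ω => (B ω, C ω)) t.2) := by
    rintro ⟨a, b, c⟩
    rcases eq_or_lt_of_le (μ.prob_nonneg' (fun ω => (A ω, B ω, C ω)) (a, b, c)) with h0 | h0
    · rw [← h0]; ring
    · have hprod : μ.prob (fun ω => (A ω, B ω, C ω)) (a, b, c) * μ.prob B b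
          = μ.prob (fun ω => (A ω, B ω)) (a, b) * μ.prob (fun ω => (B ω, C ω)) (b, c) := h a b c
      have hBpos : 0 < μ.prob B b :=
        lt_of_lt_of_le h0 (μ.prob_le_comp' (fun t : α × β × γ => t.2.1)
          (fun ω => (A ω, B ω, C ω)) (a, b, c))
      have hABpos : 0 < μ.prob (fun ω => (A ω, B ω)) (a, b) :=
        lt_of_lt_of_le h0 (μ.prob_le_comp' (fun t : α × β × γ => (t.1, t.2.1))
          (fun ω => (A ω, B ω, C ω)) (a, b, c))
      have hBCpos : 0 < μ.prob (fun ω => (B ω, C ω)) (b, c) :=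
        lt_of_lt_of_le h0 (μ.prob_le_comp' (fun t : α × β × γ => t.2)
          (fun ω => (A ω, B ω, C ω)) (a, b, c))
      have hlog : Real.log (μ.prob (fun ω => (A ω, B ω, C ω)) (a, b, c)) + Real.log (μ.prob B b)
          = Real.log (μ.prob (fun ω => (A ω, B ω)) (a, b))
            + Real.log (μ.prob (fun ω => (B ω, C ω)) (b, c)) := by
        rw [← Real.log_mul (ne_of_gt h0) (ne_of_gt hBpos),
          ← Real.log_mul (ne_of_gt hABpos) (ne_of_gt hBCpos), hprod]
      linear_combination μ.prob (fun ω => (A ω, B ω, C ω)) (a, b, c) * hlog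
  have hsum : (∑ t : α × β × γ,
      (μ.prob (fun ω => (A ω, B ω, C ω)) t * Real.log (μ.prob (fun ω => (A ω, B ω, C ω)) t)
        + μ.prob (fun ω => (A ω, B ω, C ω)) t * Real.log (μ.prob B t.2.1)))
      = ∑ t : α × β × γ,
      (μ.prob (fun ω => (A ω, B ω, C ω)) t * Real.log (μ.prob (fun ω => (A ω, B ω)) (t.1, t.2.1))
        + μ.prob (fun ω => (A ω, B ω, C ω)) t * Real.log (μ.prob (fun ω => (B ω, C ω)) t.2)) :=
    Finset.sum_congr rfl fun t _ => key t
  simp only [Finset.sum_add_distrib] at hsum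
  linarith

end FinPMF

/-- With `L_v = L ⊕ K`, if `W ⟂ L`, `K ⟂ L`, and the Markov chain
`L − L_v − (Z, W)` holds, then `I(W, L; Z) ≤ I(W; Z) + H(L_v) − H(K)`. -/
theorem stmt_9 {Ω G 𝒲 𝒵 : Type*} [Fintype Ω] [Fintype G] [DecidableEq G] [AddCommGroup G]
    [Fintype 𝒲] [DecidableEq 𝒲] [Fintype 𝒵] [DecidableEq 𝒵]
    (μ : FinPMF Ω) (W : Ω → 𝒲) (Z : Ω → 𝒵) (L K : Ω → G)
    (hWL : μ.Indep W L)
    (hKL : μ.Indep K L)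
    (hMarkov : μ.CondIndep L (fun ω => L ω + K ω) (fun ω => (Z ω, W ω))) :
    μ.mutInfo (fun ω => (W ω, L ω)) Z
      ≤ μ.mutInfo W Z + μ.H (fun ω => L ω + K ω) - μ.H K := by
  have e_WL : μ.H (fun ω => (W ω, L ω)) = μ.H W + μ.H L := μ.H_pair_of_indep' W L hWL
  have e_KL : μ.H (fun ω => (K ω, L ω)) = μ.H K + μ.H L := μ.H_pair_of_indep' K L hKL
  have e_swap : μ.H (fun ω => (L ω, K ω)) = μ.H (fun ω => (K ω, L ω)) :=
    μ.H_equiv' (Equiv.prodComm G G) (fun ω => (K ω, L ω))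
  have e_LV : μ.H (fun ω => (L ω, L ω + K ω)) = μ.H (fun ω => (L ω, K ω)) :=
    μ.H_equiv' ⟨fun p => (p.1, p.1 + p.2), fun p => (p.1, p.2 - p.1),
      fun p => by simp, fun p => by simp⟩ (fun ω => (L ω, K ω))
  have e_S : μ.H (fun ω => (W ω, Z ω)) = μ.H (fun ω => (Z ω, W ω)) :=
    μ.H_equiv' (Equiv.prodComm 𝒵 𝒲) (fun ω => (Z ω, W ω))
  have e_WLZ : μ.H (fun ω => (L ω, Z ω, W ω)) = μ.H (fun ω => ((W ω, L ω), Z ω)) :=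
    μ.H_equiv' (⟨fun p => (p.1.2, p.2, p.1.1), fun q => ((q.2.2, q.1), q.2.1),
      fun p => rfl, fun q => rfl⟩ : ((𝒲 × G) × 𝒵) ≃ (G × 𝒵 × 𝒲))
      (fun ω => ((W ω, L ω), Z ω))
  have submod : μ.H (fun ω => (L ω, L ω + K ω, (Z ω, W ω))) + μ.H (fun ω => (Z ω, W ω))
      ≤ μ.H (fun ω => (L ω, Z ω, W ω)) + μ.H (fun ω => (L ω + K ω, (Z ω, W ω))) :=
    μ.submodular' L (fun ω => L ω + K ω) (fun ω => (Z ω, W ω))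
  have markov : μ.H (fun ω => (L ω, L ω + K ω, (Z ω, W ω))) + μ.H (fun ω => L ω + K ω)
      = μ.H (fun ω => (L ω, L ω + K ω)) + μ.H (fun ω => (L ω + K ω, (Z ω, W ω))) :=
    μ.condIndep_entropy' L (fun ω => L ω + K ω) (fun ω => (Z ω, W ω)) hMarkov
  simp only [FinPMF.mutInfo]
  linarith
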